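/- Let K be a field of characteristic zero and let g, h ∈ K⟦t⟧ with h having constant term 1. Then there exists a unique formal power series y ∈ K⟦t⟧ with constant term 0 satisfying y' = g·h(y), where y' is the formal derivative and h(y) is the composition of power series (well-defined since y has constant term 0). -/

import Mathlib

/-!
The equation is solved coefficient by coefficient: comparing the coefficients of `t ^ n` gives
`(n + 1) y_{n+1} = [t ^ n] (g · h(y))`, and the right-hand side only involves `y_0, …, y_n`.
So `y_{n+1}` is forced, which gives uniqueness, and can be chosen, which gives existence.
This works for every right-hand side `F y` whose first `n` coefficients depend only on those
of `y`, and needs `n + 1` to be invertible.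
-/

open PowerSeries

/-- Composition `h(u)` of formal power series, intended for `u` with zero constant term
(in which case `coeff n (u ^ i) = 0` for `i > n`, so the truncated sum below is the
full substitution). -/
noncomputable def pcomp {R : Type*} [CommSemiring R] (h u : R⟦X⟧) : R⟦X⟧ :=
  PowerSeries.mk fun n => ∑ i ∈ Finset.range (n + 1), coeff i h * coeff n (u ^ i)

namespace PowerSeries

variable {R : Type*} [CommSemiring R]

theorem coeff_eq_of_trunc_eq {f g : R⟦X⟧} {n m : ℕ} (h : trunc n f = trunc n g) (hm : m < n) :
    coeff m f = coeff m g := by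
  rw [← coeff_coe_trunc_of_lt hm, h, coeff_coe_trunc_of_lt hm]

theorem trunc_eq_trunc_iff {f g : R⟦X⟧} {n : ℕ} :
    trunc n f = trunc n g ↔ ∀ m < n, coeff m f = coeff m g := by
  refine ⟨fun h m hm => coeff_eq_of_trunc_eq h hm, fun h => Polynomial.ext fun m => ?_⟩
  rw [coeff_trunc, coeff_trunc]
  split_ifs with hm
  · exact h m hm
  · rfl

theorem trunc_pow_eq_of_trunc_eq {f g : R⟦X⟧} {n : ℕ} (h : trunc n f = trunc n g) (i : ℕ) :
    trunc n (f ^ i) = trunc n (g ^ i) := by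
  rw [← trunc_trunc_pow, h, trunc_trunc_pow]

def IsCausal (F : R⟦X⟧ → R⟦X⟧) : Prop :=
  ∀ n f g, trunc n f = trunc n g → trunc n (F f) = trunc n (F g)

namespace IsCausal

variable {F : R⟦X⟧ → R⟦X⟧}

theorem coeff_eq (hF : IsCausal F) {f g : R⟦X⟧} {n : ℕ} (h : trunc (n + 1) f = trunc (n + 1) g) :
    coeff n (F f) = coeff n (F g) :=
  coeff_eq_of_trunc_eq (hF _ _ _ h) n.lt_succ_self

theorem const_mul (hF : IsCausal F) (g : R⟦X⟧) : IsCausal fun f => g * F f := by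
  intro n f₁ f₂ h
  rw [← trunc_mul_trunc, hF n f₁ f₂ h, trunc_mul_trunc]

end IsCausal

end PowerSeries

theorem isCausal_pcomp {R : Type*} [CommSemiring R] (h : R⟦X⟧) : IsCausal (pcomp h) := by
  refine fun n f g hfg => trunc_eq_trunc_iff.mpr fun m hm => ?_
  have hpow (i : ℕ) : coeff m (f ^ i) = coeff m (g ^ i) :=
    coeff_eq_of_trunc_eq (trunc_pow_eq_of_trunc_eq hfg i) hm
  simp only [pcomp, coeff_mk, hpow]

namespace PowerSeries

section Ode

variable {K : Type*} [Field K] (F : K⟦X⟧ → K⟦X⟧) (a : K)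

/-- The unique polynomial of degree `≤ n` that solves `f' = F f`, `f(0) = a` modulo `X ^ n`. -/
noncomputable def odeApprox : ℕ → K⟦X⟧
  | 0 => C a
  | n + 1 => odeApprox n + monomial (n + 1) (((n : K) + 1)⁻¹ * coeff n (F (odeApprox n)))

theorem coeff_odeApprox_of_lt {n m : ℕ} (h : n < m) : coeff m (odeApprox F a n) = 0 := by
  induction n with
  | zero => rw [odeApprox, coeff_C, if_neg (by omega)]
  | succ n ih =>
    rw [odeApprox, map_add, coeff_monomial, if_neg (by omega), ih (by omega), add_zero]

theorem coeff_odeApprox_of_le {n m : ℕ} (h : m ≤ n) :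
    coeff m (odeApprox F a n) = coeff m (odeApprox F a m) := by
  induction n, h using Nat.le_induction with
  | base => rfl
  | succ n hmn ih =>
    simp only [odeApprox, map_add, coeff_monomial, if_neg (by omega : m ≠ n + 1), add_zero, ih]

theorem coeff_succ_odeApprox_succ (n : ℕ) :
    coeff (n + 1) (odeApprox F a (n + 1)) = ((n : K) + 1)⁻¹ * coeff n (F (odeApprox F a n)) := by
  simp [odeApprox, coeff_odeApprox_of_lt F a n.lt_succ_self]

noncomputable def odeSol : K⟦X⟧ :=
  mk fun n => coeff n (odeApprox F a n)

theorem trunc_odeSol (n : ℕ) : trunc (n + 1) (odeSol F a) = trunc (n + 1) (odeApprox F a n) :=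
  trunc_eq_trunc_iff.mpr fun m hm => by
    rw [odeSol, coeff_mk, coeff_odeApprox_of_le F a (Nat.lt_succ_iff.mp hm)]

end Ode

theorem derivative_eq_iff_coeff {R : Type*} [CommSemiring R] {f g : R⟦X⟧} :
    d⁄dX R f = g ↔ ∀ n, coeff (n + 1) f * (n + 1) = coeff n g := by
  simp only [PowerSeries.ext_iff, coeff_derivative]

variable {K : Type*} [Field K] [CharZero K] {F : K⟦X⟧ → K⟦X⟧}

theorem derivative_odeSol (hF : IsCausal F) (a : K) : d⁄dX K (odeSol F a) = F (odeSol F a) := by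
  refine derivative_eq_iff_coeff.mpr fun n => ?_
  have hn : ((n : K) + 1) ≠ 0 := Nat.cast_add_one_ne_zero n
  rw [hF.coeff_eq (trunc_odeSol F a n),
    coeff_eq_of_trunc_eq (trunc_odeSol F a (n + 1)) (n + 1).lt_succ_self,
    coeff_succ_odeApprox_succ, mul_comm, mul_inv_cancel_left₀ hn]

theorem eq_of_derivative_eq (hF : IsCausal F) {f g : K⟦X⟧}
    (h₀ : constantCoeff f = constantCoeff g) (hf : d⁄dX K f = F f) (hg : d⁄dX K g = F g) :
    f = g := by
  have htrunc (n : ℕ) : trunc n f = trunc n g := by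
    induction n with
    | zero => rfl
    | succ n ih =>
      rw [trunc_succ, trunc_succ, ih]
      congr 2
      cases n with
      | zero => simpa using h₀
      | succ n =>
        have hn : ((n : K) + 1) ≠ 0 := Nat.cast_add_one_ne_zero n
        refine mul_right_cancel₀ hn ?_
        rw [derivative_eq_iff_coeff.mp hf, derivative_eq_iff_coeff.mp hg, hF.coeff_eq ih]
  exact ext fun n => coeff_eq_of_trunc_eq (htrunc (n + 1)) n.lt_succ_self

theorem existsUnique_derivative_eq (hF : IsCausal F) (a : K) :
    ∃! f : K⟦X⟧, constantCoeff f = a ∧ d⁄dX K f = F f := by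
  refine ⟨odeSol F a, ⟨?_, derivative_odeSol hF a⟩, fun f ⟨hf₀, hf⟩ => ?_⟩
  · simp [odeSol, odeApprox]
  · refine eq_of_derivative_eq hF ?_ hf (derivative_odeSol hF a)
    simp [hf₀, odeSol, odeApprox]

end PowerSeries

theorem stmt0 {K : Type*} [Field K] [CharZero K] (g h : K⟦X⟧) :
    ∃! y : K⟦X⟧, constantCoeff y = 0 ∧ derivativeFun y = g * pcomp h y :=
  existsUnique_derivative_eq ((isCausal_pcomp h).const_mul g) 0
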